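/- arXiv:2601.20600 — 7 statements merged into one kernel-verified Lean document; each statement's English description precedes it below -/
import Mathlib

section
/- Let C be an [n,k] linear code over F_q with generator matrix G. Then C is an LCD code (i.e., Hull(C) = {0}) if and only if the k×k matrix G·Gᵀ is invertible. -/
/-! The hull of the row space of `G` is the image of `ker (G * Gᵀ)` under `y ↦ y ᵥ* G`, since
`y ᵥ* G` is orthogonal to every row of `G` exactly when `y ᵥ* (G * Gᵀ) = 0`. Independent rows
make `y ↦ y ᵥ* G` injective, so the hull is trivial iff `G * Gᵀ` has trivial left kernel. -/

open Matrix

variable {F : Type*} [Field F]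

/-- Row space of a matrix: the code generated by its rows. -/
def rowSpace {m ι : Type*} (G : Matrix m ι F) : Submodule F (ι → F) :=
  Submodule.span F (Set.range G)

/-- Dual of a code with respect to the form `⟨x, c⟩ = ∑ i, x i * s (c i)`.
For `s = id` this is the Euclidean dual; for `s = (· ^ q)` the Hermitian dual. -/
def sDual {ι : Type*} [Fintype ι] (s : F → F) (C : Submodule F (ι → F)) :
    Submodule F (ι → F) where
  carrier := {x | ∀ c ∈ C, ∑ i, x i * s (c i) = 0}
  zero_mem' := by intro c hc; simp
  add_mem' := by
    intro a b ha hb c hc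
    simp [Pi.add_apply, add_mul, Finset.sum_add_distrib, ha c hc, hb c hc]
  smul_mem' := by
    intro r a ha c hc
    simp [Pi.smul_apply, smul_eq_mul, mul_assoc, ← Finset.mul_sum, ha c hc]

/-- The hull of a code: its intersection with its dual. -/
def sHull {ι : Type*} [Fintype ι] (s : F → F) (C : Submodule F (ι → F)) :
    Submodule F (ι → F) :=
  C ⊓ sDual s C

/-- `Ct` is an LCD embedding of `C`: `Ct` is LCD and puncturing `Ct` on the
complement of some coordinate subset recovers `C`. -/
def IsLCDEmbedding {ι : Type*} [Fintype ι] {N : ℕ} (s : F → F)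
    (C : Submodule F (ι → F)) (Ct : Submodule F (Fin N → F)) : Prop :=
  sHull s Ct = ⊥ ∧ ∃ f : ι → Fin N, Function.Injective f ∧
    Submodule.map (LinearMap.funLeft F F f) Ct = C


section

variable {m ι : Type*}

theorem rowSpace_eq_range_vecMulLinear [Fintype m] (G : Matrix m ι F) :
    rowSpace G = LinearMap.range G.vecMulLinear :=
  (range_vecMulLinear G).symm

theorem mem_sDual_id_rowSpace_iff [Fintype ι] (G : Matrix m ι F) (x : ι → F) :
    x ∈ sDual id (rowSpace G) ↔ G *ᵥ x = 0 := by
  change rowSpace G ≤ LinearMap.ker (dotProductBilin F F x) ↔ _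
  rw [rowSpace, Submodule.span_le, funext_iff]
  exact Set.range_subset_iff.trans <| forall_congr' fun i => by
    rw [SetLike.mem_coe, LinearMap.mem_ker, dotProductBilin_apply_apply, dotProduct_comm]
    rfl

theorem vecMul_mem_sDual_id_rowSpace_iff [Fintype m] [Fintype ι] (G : Matrix m ι F) (y : m → F) :
    y ᵥ* G ∈ sDual id (rowSpace G) ↔ y ᵥ* (G * Gᵀ) = 0 := by
  rw [mem_sDual_id_rowSpace_iff, ← vecMul_transpose, vecMul_vecMul]

theorem sHull_id_rowSpace [Fintype m] [Fintype ι] (G : Matrix m ι F) :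
    sHull id (rowSpace G) = (LinearMap.ker (G * Gᵀ).vecMulLinear).map G.vecMulLinear := by
  ext v
  simp only [sHull, Submodule.mem_inf, Submodule.mem_map, LinearMap.mem_ker, vecMulLinear_apply]
  constructor
  · rintro ⟨hv, hvD⟩
    obtain ⟨y, rfl⟩ := (rowSpace_eq_range_vecMulLinear G ▸ hv : v ∈ LinearMap.range _)
    exact ⟨y, (vecMul_mem_sDual_id_rowSpace_iff G y).1 hvD, rfl⟩
  · rintro ⟨y, hy, rfl⟩
    exact ⟨rowSpace_eq_range_vecMulLinear G ▸ ⟨y, rfl⟩, (vecMul_mem_sDual_id_rowSpace_iff G y).2 hy⟩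

theorem sHull_id_rowSpace_eq_bot_iff [Fintype m] [DecidableEq m] [Fintype ι] {G : Matrix m ι F}
    (hG : LinearIndependent F G) : sHull id (rowSpace G) = ⊥ ↔ IsUnit (G * Gᵀ) := by
  have hinj : Function.Injective G.vecMulLinear := Matrix.vecMul_injective_iff.2 hG
  rw [sHull_id_rowSpace, ← Submodule.map_bot G.vecMulLinear,
    (Submodule.map_injective_of_injective hinj).eq_iff, LinearMap.ker_eq_bot,
    coe_vecMulLinear, vecMul_injective_iff_isUnit]

end

theorem stmt1_general {F : Type*} [Field F] {n k : ℕ}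
    {C : Submodule F (Fin n → F)} (G : Matrix (Fin k) (Fin n) F)
    (hGC : rowSpace G = C) (hG : LinearIndependent F G) :
    sHull (id : F → F) C = ⊥ ↔ IsUnit (G * Gᵀ) :=
  hGC ▸ sHull_id_rowSpace_eq_bot_iff hG

/-- LCD iff `G * Gᵀ` is invertible. -/
theorem stmt1 {F : Type*} [Field F] [Fintype F] {n k : ℕ}
    {C : Submodule F (Fin n → F)} (G : Matrix (Fin k) (Fin n) F)
    (hGC : rowSpace G = C) (hG : LinearIndependent F G) :
    sHull (id : F → F) C = ⊥ ↔ IsUnit (G * Gᵀ) :=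
  stmt1_general G hGC hG
end

section
/- Let G be a k×n matrix over F_3 generating a linear code C. Then the matrix G̃ = [G | G | G | I_k] generates an LCD code of length 3n+k whose puncturing on the last 2n+k coordinates is C. In particular, every ternary linear code has an LCD embedding. -/
open Matrix

variable {F : Type*} [Field F]

/-! Over `𝔽₃` the Gram matrix of `[G | G | G | I]` is `3 G Gᵀ + I = I`, which is invertible, so
the code it generates is LCD by (one direction of) Massey's criterion; puncturing away all but the
first block of columns leaves `G`, whose rows span `C`. -/

section RowSpace

variable {m ι ι' : Type*}

theorem rowSpace_eq_span_row (M : Matrix m ι F) :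
    rowSpace M = Submodule.span F (Set.range M.row) := rfl

theorem mem_rowSpace_iff (M : Matrix m ι F) [Fintype m] {x : ι → F} :
    x ∈ rowSpace M ↔ ∃ c, c ᵥ* M = x := by
  rw [rowSpace_eq_span_row, ← range_vecMulLinear, LinearMap.mem_range]
  rfl

theorem map_funLeft_rowSpace (M : Matrix m ι' F) (f : ι → ι') :
    (rowSpace M).map (LinearMap.funLeft F F f) = rowSpace (M.submatrix id f) := by
  rw [rowSpace_eq_span_row, rowSpace_eq_span_row, Submodule.map_span, ← Set.range_comp]
  rfl

theorem mulVec_eq_zero_of_mem_sDual_rowSpace [Fintype ι] (s : F → F) (M : Matrix m ι F)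
    {x : ι → F} (hx : x ∈ sDual s (rowSpace M)) : M.map s *ᵥ x = 0 := by
  funext j
  rw [Pi.zero_apply, ← hx (M j) (Submodule.subset_span ⟨j, rfl⟩), mulVec, dotProduct]
  simp only [map_apply, mul_comm]

theorem sHull_rowSpace_eq_bot_of_isUnit [Fintype m] [DecidableEq m] [Fintype ι] (s : F → F)
    (M : Matrix m ι F) (hM : IsUnit (M.map s * Mᵀ)) : sHull s (rowSpace M) = ⊥ := by
  rw [eq_bot_iff]
  rintro x ⟨hxC, hxD⟩
  obtain ⟨c, rfl⟩ := (mem_rowSpace_iff M).1 hxC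
  have hc : (M.map s * Mᵀ) *ᵥ c = 0 := by
    rw [← mulVec_mulVec, mulVec_transpose]
    exact mulVec_eq_zero_of_mem_sDual_rowSpace s M hxD
  have : c = 0 := mulVec_injective_iff_isUnit.2 hM (by rwa [mulVec_zero])
  simp [this]

end RowSpace

theorem fromCols_triple_one_mul_transpose {R k n : Type*} [CommRing R] [CharP R 3]
    [Fintype k] [Fintype n] [DecidableEq k] (G : Matrix k n R) :
    fromCols (fromCols (fromCols G G) G) (1 : Matrix k k R) *
      (fromCols (fromCols (fromCols G G) G) (1 : Matrix k k R))ᵀ = 1 := by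
  have h3 : G * Gᵀ + G * Gᵀ + G * Gᵀ = (3 : R) • (G * Gᵀ) := by
    rw [show (3 : R) = 1 + 1 + 1 by norm_num]
    simp only [add_smul, one_smul]
  simp only [transpose_fromCols, fromCols_mul_fromRows, transpose_one, Matrix.mul_one, h3,
    CharP.ofNat_eq_zero, zero_smul, zero_add]

/-- `[G | G | G | I_k]` gives an LCD embedding of any ternary code. -/
theorem stmt3 {n k : ℕ} (G : Matrix (Fin k) (Fin n) (ZMod 3)) :
    sHull (id : ZMod 3 → ZMod 3)
        (rowSpace (fromCols (fromCols (fromCols G G) G)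
          (1 : Matrix (Fin k) (Fin k) (ZMod 3)))) = ⊥ ∧
      Submodule.map
        (LinearMap.funLeft (ZMod 3) (ZMod 3)
          ((Sum.inl ∘ Sum.inl ∘ Sum.inl : Fin n → ((Fin n ⊕ Fin n) ⊕ Fin n) ⊕ Fin k)))
        (rowSpace (fromCols (fromCols (fromCols G G) G)
          (1 : Matrix (Fin k) (Fin k) (ZMod 3)))) = rowSpace G := by
  constructor
  · apply sHull_rowSpace_eq_bot_of_isUnit
    rw [map_id, fromCols_triple_one_mul_transpose]
    exact isUnit_one
  · rw [map_funLeft_rowSpace]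
    rfl
end

section
/- Let C be an [n,k] linear code over F_q with ℓ = dim Hull(C), and let C̃ be an LCD code of length n+m obtained by appending m columns to a generator matrix of C (i.e., C̃ has generator matrix [G | D] for some k×m matrix D, where G generates C). Then m ≥ ℓ. -/
open Matrix

variable {F : Type*} [Field F]

/-!
Let `W ≤ C̃` consist of the codewords whose first `n` coordinates lie in `Hull(C)`. For `w ∈ W`
and `c ∈ C̃` the inner product `⟨w, c⟩` reduces to the inner product of the last `m` coordinates,
so a `w ∈ W` vanishing there lies in `Hull(C̃) = 0`. Hence `w ↦ (w_{n+1}, …, w_{n+m})` embeds `W`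
into `F^m`, while `w ↦ (w_1, …, w_n)` maps `W` onto `Hull(C)`.
-/

section Puncture

variable {ι κ : Type*} [Fintype ι] [Fintype κ]

lemma mem_sHull_of_comp_inr_eq_zero (s : F → F) {Ct : Submodule F (ι ⊕ κ → F)}
    {x : ι ⊕ κ → F} (hx : x ∈ Ct)
    (hxl : x ∘ Sum.inl ∈ sDual s (Ct.map (LinearMap.funLeft F F Sum.inl)))
    (hxr : x ∘ Sum.inr = 0) : x ∈ sHull s Ct := by
  refine ⟨hx, fun c hc => ?_⟩
  have hl : ∑ i, x (Sum.inl i) * s (c (Sum.inl i)) = 0 := hxl _ ⟨c, hc, rfl⟩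
  have hr : ∀ j, x (Sum.inr j) = 0 := congrFun hxr
  simp [Fintype.sum_sum_type, hl, hr]

theorem finrank_sHull_map_inl_le {s : F → F} {Ct : Submodule F (ι ⊕ κ → F)}
    (hLCD : sHull s Ct = ⊥) :
    Module.finrank F (sHull s (Ct.map (LinearMap.funLeft F F Sum.inl))) ≤ Fintype.card κ := by
  set C := Ct.map (LinearMap.funLeft F F Sum.inl)
  set W := Ct ⊓ (sHull s C).comap (LinearMap.funLeft F F Sum.inl)
  have hHull_le : sHull s C ≤ W.map (LinearMap.funLeft F F Sum.inl) := by
    intro h hh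
    obtain ⟨x, hx, rfl⟩ := hh.1
    exact ⟨x, ⟨hx, hh⟩, rfl⟩
  have hinj :
      Function.Injective ((LinearMap.funLeft F F (Sum.inr : κ → ι ⊕ κ)).domRestrict W) := by
    rw [← LinearMap.ker_eq_bot, eq_bot_iff]
    rintro ⟨x, hxCt, hxH⟩ hxr
    have hx := mem_sHull_of_comp_inr_eq_zero s hxCt hxH.2 hxr
    rw [hLCD, Submodule.mem_bot] at hx
    simpa [Subtype.ext_iff] using hx
  calc Module.finrank F (sHull s C)
      ≤ Module.finrank F (W.map (LinearMap.funLeft F F Sum.inl)) :=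
        Submodule.finrank_mono hHull_le
    _ ≤ Module.finrank F W := Submodule.finrank_map_le _ _
    _ ≤ Module.finrank F (κ → F) := LinearMap.finrank_le_finrank_of_injective hinj
    _ = Fintype.card κ := Module.finrank_fintype_fun_eq_card F

end Puncture

lemma rowSpace_fromCols_map_inl {k ι κ : Type*} (G : Matrix k ι F) (D : Matrix k κ F) :
    (rowSpace (fromCols G D)).map (LinearMap.funLeft F F Sum.inl) = rowSpace G := by
  rw [rowSpace, rowSpace, Submodule.map_span,
    ← Set.range_comp (g := LinearMap.funLeft F F Sum.inl) (f := fromCols G D)]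
  rfl

theorem stmt5_general {F : Type*} [Field F] {n k m ℓ : ℕ}
    {C : Submodule F (Fin n → F)} (G : Matrix (Fin k) (Fin n) F)
    (hGC : rowSpace G = C)
    (hl : ℓ = Module.finrank F ↥(sHull (id : F → F) C))
    (D : Matrix (Fin k) (Fin m) F)
    (hLCD : sHull (id : F → F) (rowSpace (fromCols G D)) = ⊥) :
    ℓ ≤ m := by
  subst hGC hl
  rw [← rowSpace_fromCols_map_inl G D]
  simpa using finrank_sHull_map_inl_le hLCD

/-- any LCD code `[G | D]` extending `C` needs at least `ℓ = dim Hull(C)` extra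
columns. -/
theorem stmt5 {F : Type*} [Field F] [Fintype F] {n k m ℓ : ℕ}
    {C : Submodule F (Fin n → F)} (G : Matrix (Fin k) (Fin n) F)
    (hGC : rowSpace G = C) (hG : LinearIndependent F G)
    (hl : ℓ = Module.finrank F ↥(sHull (id : F → F) C))
    (D : Matrix (Fin k) (Fin m) F)
    (hLCD : sHull (id : F → F) (rowSpace (fromCols G D)) = ⊥) :
    ℓ ≤ m :=
  stmt5_general G hGC hl D hLCD
end

section
/- Let C̃ be an LCD code of length n+ℓ with generator matrix of block form [[H, D],[A, C]] where [H; A] is k×n, H is ℓ×n and generates Hull of the punctured code (the code generated by [H; A]), D is ℓ×ℓ, and C is (k−ℓ)×ℓ. Then D is invertible. -/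
open Matrix

variable {F : Type*} [Field F]

/-! If `u D = 0` with `u ≠ 0`, the codeword `(u, 0) [[H, D], [A, Cm]] = (u H, 0)` is orthogonal to
every codeword, because its only nonzero part `u H` lies in the hull of the punctured code generated
by `[H; A]`. So it lies in the trivial hull of the LCD code, and linear independence of the rows
forces `u = 0`. -/

lemma vecMul_mem_rowSpace {m ι : Type*} [Fintype m] (G : Matrix m ι F) (v : m → F) :
    v ᵥ* G ∈ rowSpace G :=
  (range_vecMulLinear G).le (LinearMap.mem_range_self _ v)

lemma rowSpace_map_funLeft {m ι κ : Type*} (G : Matrix m ι F) (f : κ → ι) :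
    (rowSpace G).map (LinearMap.funLeft F F f) = rowSpace (G.submatrix id f) := by
  rw [rowSpace, Submodule.map_span]
  exact congrArg (Submodule.span F) (Set.range_comp (LinearMap.funLeft F F f) (G ·)).symm

lemma sumElim_zero_mem_sDual_iff {ι κ : Type*} [Fintype ι] [Fintype κ] (s : F → F)
    (C : Submodule F (ι ⊕ κ → F)) (x : ι → F) :
    Sum.elim x 0 ∈ sDual s C ↔ x ∈ sDual s (C.map (LinearMap.funLeft F F Sum.inl)) := by
  change (∀ c ∈ C, _ = _) ↔ ∀ c ∈ C.map _, _ = _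
  simp [Submodule.mem_map, Fintype.sum_sum_type, LinearMap.funLeft_apply]

lemma fromBlocks_submatrix_id_inl {R m₁ m₂ n₁ n₂ : Type*} (B₁₁ : Matrix m₁ n₁ R)
    (B₁₂ : Matrix m₁ n₂ R) (B₂₁ : Matrix m₂ n₁ R) (B₂₂ : Matrix m₂ n₂ R) :
    (fromBlocks B₁₁ B₁₂ B₂₁ B₂₂).submatrix id Sum.inl = fromRows B₁₁ B₂₁ := by
  ext (i | i) j <;> rfl

theorem stmt8_general {F : Type*} [Field F] {n ℓ a : ℕ}
    (H : Matrix (Fin ℓ) (Fin n) F) (A : Matrix (Fin a) (Fin n) F)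
    (D : Matrix (Fin ℓ) (Fin ℓ) F) (Cm : Matrix (Fin a) (Fin ℓ) F)
    (hind : LinearIndependent F (fromBlocks H D A Cm))
    (hH : rowSpace H = sHull (id : F → F) (rowSpace (fromRows H A)))
    (hLCD : sHull (id : F → F) (rowSpace (fromBlocks H D A Cm)) = ⊥) :
    IsUnit D := by
  rw [isUnit_iff_isUnit_det, isUnit_iff_ne_zero]
  intro hdet
  obtain ⟨u, hu, huD⟩ := exists_vecMul_eq_zero_iff.2 hdet
  set M := fromBlocks H D A Cm
  have hvM : Sum.elim u 0 ᵥ* M = Sum.elim (u ᵥ* H) 0 := by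
    simp [M, vecMul_fromBlocks, huD]
  have hHull : u ᵥ* H ∈ sHull id (rowSpace (fromRows H A)) := hH ▸ vecMul_mem_rowSpace H u
  have hDual : Sum.elim (u ᵥ* H) 0 ∈ sDual id (rowSpace M) := by
    rw [sumElim_zero_mem_sDual_iff, rowSpace_map_funLeft, fromBlocks_submatrix_id_inl]
    exact hHull.2
  have hv : Sum.elim u 0 ᵥ* M = 0 ᵥ* M := by
    rw [zero_vecMul, ← Submodule.mem_bot F, ← hLCD]
    exact ⟨vecMul_mem_rowSpace M _, hvM ▸ hDual⟩
  have hv0 : Sum.elim u 0 = 0 := vecMul_injective_iff.2 hind hv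
  exact hu (funext fun i => congr_fun hv0 (Sum.inl i))

/-- in a shortest LCD embedding `[[H, D], [A, Cm]]` the block `D` is invertible. -/
theorem stmt8 {F : Type*} [Field F] [Fintype F] {n ℓ a : ℕ}
    (H : Matrix (Fin ℓ) (Fin n) F) (A : Matrix (Fin a) (Fin n) F)
    (D : Matrix (Fin ℓ) (Fin ℓ) F) (Cm : Matrix (Fin a) (Fin ℓ) F)
    (hind : LinearIndependent F (fromBlocks H D A Cm))
    (hH : rowSpace H = sHull (id : F → F) (rowSpace (fromRows H A)))
    (hLCD : sHull (id : F → F) (rowSpace (fromBlocks H D A Cm)) = ⊥) :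
    IsUnit D :=
  stmt8_general H A D Cm hind hH hLCD
end

section
/- Every shortest LCD embedding C̃ of an [n,k] code C with hull dimension ℓ has a generator matrix of the form [[H, I_ℓ],[A, C']], where H generates Hull(C), [H; A] generates C, and C' is some (k−ℓ)×ℓ matrix. -/
/-! Let `p`, `q` restrict a word of `C̃` to its first `n` and its last `ℓ` coordinates, and let
`L = {x ∈ C̃ | p x ∈ Hull(C)}` (`sHullLift`). If `x ∈ L` and `q x = 0`, then
`⟨x, c⟩ = ⟨p x, p c⟩ + ⟨q x, q c⟩ = 0` for every `c ∈ C̃`, so `x` lies in the hull of the LCD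
code `C̃` and vanishes. Hence `q` embeds `L` into `F^ℓ`, while `p` maps `L` onto `Hull(C)`, of
dimension `ℓ`: both maps are isomorphisms, and `p` is injective on `C̃` because its kernel there
lies in `L`. The `q`-preimage of the standard basis of `F^ℓ`, extended to a basis of `C̃`, has
the rows `[H | I_ℓ]` on top. -/

open Matrix

variable {F : Type*} [Field F]

open Module Submodule

theorem LinearIndependent.exists_basis_sum_inl_eq {K V ι : Type*} [Field K] [AddCommGroup V] [Module K V]
    [FiniteDimensional K V] [Fintype ι] {b : ι → V} (hb : LinearIndependent K b) {m : ℕ}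
    (hm : finrank K V = Fintype.card ι + m) :
    ∃ B : Basis (ι ⊕ Fin m) K V, ∀ i, B (Sum.inl i) = b i := by
  obtain ⟨W, hW⟩ := (span K (Set.range b)).exists_isCompl
  have hWm : finrank K W = m := by
    have := finrank_add_eq_of_isCompl hW
    rw [finrank_span_eq_card hb] at this
    omega
  refine ⟨((Basis.span hb).prod (finBasisOfFinrankEq K W hWm)).map (prodEquivOfIsCompl _ _ hW),
    fun i => ?_⟩
  simp [Basis.span_apply]

theorem rowSpace_basis_comp {m ι ι' : Type*}
    (f : (ι → F) →ₗ[F] (ι' → F)) {V : Submodule F (ι → F)} (B : Basis m F V) :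
    rowSpace (fun i => f (B i)) = V.map f := by
  unfold rowSpace
  rw [show (fun i => f (B i)) = f ∘ V.subtype ∘ B from rfl, Set.range_comp,
    Set.range_comp, ← map_span, ← map_span, B.span_eq, Submodule.map_top, range_subtype]

theorem sHull_le {ι : Type*} [Fintype ι] (s : F → F) (C : Submodule F (ι → F)) :
    sHull s C ≤ C :=
  inf_le_left

section LCDEmbedding

variable {ι κ : Type*} [Fintype ι] (s : F → F) {Ct : Submodule F (ι ⊕ κ → F)}

local notation "πι" => LinearMap.funLeft F F (Sum.inl : ι → ι ⊕ κ)
local notation "πκ" => LinearMap.funLeft F F (Sum.inr : κ → ι ⊕ κ)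

variable (Ct) in
def sHullLift : Submodule F (ι ⊕ κ → F) :=
  Ct ⊓ (sHull s (Ct.map πι)).comap πι

theorem map_sHullLift : (sHullLift s Ct).map πι = sHull s (Ct.map πι) := by
  rw [sHullLift, ← map_inf_eq_map_inf_comap]
  exact inf_eq_right.2 (sHull_le s _)

variable [Fintype κ]

theorem mem_sDual_of_funLeft_inl_mem {x : ι ⊕ κ → F} (hx : πι x ∈ sDual s (Ct.map πι))
    (hx0 : πκ x = 0) : x ∈ sDual s Ct := by
  intro c hc
  have hxκ : ∀ j, x (Sum.inr j) = 0 := fun j => congrFun hx0 j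
  rw [Fintype.sum_sum_type]
  simpa [hxκ] using hx _ (mem_map_of_mem hc)

variable {s}

theorem injective_funLeft_inr_comp_sHullLift (h : sHull s Ct = ⊥) :
    Function.Injective (πκ ∘ₗ (sHullLift s Ct).subtype) := by
  rw [← LinearMap.ker_eq_bot, eq_bot_iff]
  rintro ⟨x, hxCt, hxH⟩ hx
  have : x ∈ sHull s Ct := ⟨hxCt, mem_sDual_of_funLeft_inl_mem s hxH.2 hx⟩
  rw [h] at this
  exact Subtype.ext (by simpa using this)

theorem finrank_sHullLift (h : sHull s Ct = ⊥)
    (hκ : finrank F (sHull s (Ct.map πι)) = Fintype.card κ) :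
    finrank F (sHullLift s Ct) = Fintype.card κ := by
  refine le_antisymm ?_ ?_
  · simpa using LinearMap.finrank_le_finrank_of_injective (injective_funLeft_inr_comp_sHullLift h)
  · rw [← hκ, ← map_sHullLift]
    exact finrank_map_le _ _

theorem injective_funLeft_inl_comp_subtype (h : sHull s Ct = ⊥)
    (hκ : finrank F (sHull s (Ct.map πι)) = Fintype.card κ) :
    Function.Injective (πι ∘ₗ Ct.subtype) := by
  have hL : LinearMap.ker (πι ∘ₗ (sHullLift s Ct).subtype) = ⊥ := by
    rw [← Submodule.finrank_eq_zero]
    have := LinearMap.finrank_range_add_finrank_ker (πι ∘ₗ (sHullLift s Ct).subtype)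
    rw [LinearMap.range_comp, Submodule.range_subtype, map_sHullLift, hκ,
      finrank_sHullLift h hκ] at this
    omega
  rw [← LinearMap.ker_eq_bot, eq_bot_iff]
  rintro ⟨x, hx⟩ hpx
  have hxL : x ∈ sHullLift s Ct := ⟨hx, by simp [show πι x = 0 from hpx]⟩
  have : (⟨x, hxL⟩ : sHullLift s Ct) ∈ LinearMap.ker (πι ∘ₗ (sHullLift s Ct).subtype) := hpx
  rw [hL] at this
  exact Subtype.ext (by simpa using this)

theorem exists_basis_sHullLift_inr [DecidableEq κ] (h : sHull s Ct = ⊥)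
    (hκ : finrank F (sHull s (Ct.map πι)) = Fintype.card κ) :
    ∃ b : Basis κ F (sHullLift s Ct), ∀ j, πκ (b j) = Pi.single j 1 := by
  let e := (πκ ∘ₗ (sHullLift s Ct).subtype).linearEquivOfInjective
    (injective_funLeft_inr_comp_sHullLift h) (by simp [finrank_sHullLift h hκ])
  refine ⟨(Pi.basisFun F κ).map e.symm, fun j => ?_⟩
  rw [Basis.map_apply, Pi.basisFun_apply]
  exact e.apply_symm_apply (Pi.single j 1)

theorem exists_fromBlocks_one_generator [DecidableEq κ] (h : sHull s Ct = ⊥)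
    (hκ : finrank F (sHull s (Ct.map πι)) = Fintype.card κ) {m : ℕ}
    (hm : finrank F (Ct.map πι) = Fintype.card κ + m) :
    ∃ (H : Matrix κ ι F) (A : Matrix (Fin m) ι F) (C' : Matrix (Fin m) κ F),
      rowSpace H = sHull s (Ct.map πι) ∧
      rowSpace (fromRows H A) = Ct.map πι ∧
      LinearIndependent F (fromBlocks H 1 A C') ∧
      rowSpace (fromBlocks H 1 A C') = Ct := by
  obtain ⟨bL, hbL⟩ := exists_basis_sHullLift_inr h hκ
  have hb : LinearIndependent F (Submodule.inclusion inf_le_left ∘ bL) :=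
    bL.linearIndependent.map' _ (Submodule.ker_inclusion _ _ _)
  have hCt : finrank F Ct = Fintype.card κ + m := by
    rw [← hm, ← LinearMap.finrank_range_of_inj (injective_funLeft_inl_comp_subtype h hκ),
      LinearMap.range_comp, Submodule.range_subtype]
  obtain ⟨B, hB⟩ := hb.exists_basis_sum_inl_eq hCt
  have hBinl : ∀ j, (B (Sum.inl j) : ι ⊕ κ → F) = bL j := fun j => by rw [hB]; rfl
  let M : Matrix (κ ⊕ Fin m) (ι ⊕ κ) F := fun i => B i
  have hM : M.toBlocks₁₂ = 1 := by
    ext j j'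
    simpa [M, toBlocks₁₂, hBinl, Pi.single_apply, one_apply, eq_comm] using congrFun (hbL j) j'
  have hH : M.toBlocks₁₁ = fun j => πι (bL j) := by
    ext j i
    simp [M, toBlocks₁₁, hBinl]
  have hHA : fromRows M.toBlocks₁₁ M.toBlocks₂₁ = fun i => πι (B i) := by
    ext (j | j) i <;> rfl
  refine ⟨M.toBlocks₁₁, M.toBlocks₂₁, M.toBlocks₂₂, ?_, ?_, ?_, ?_⟩
  · rw [hH, rowSpace_basis_comp, map_sHullLift]
  · rw [hHA, rowSpace_basis_comp]
  · rw [← hM, fromBlocks_toBlocks]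
    exact B.linearIndependent.map' Ct.subtype Ct.ker_subtype
  · rw [← hM, fromBlocks_toBlocks]
    simpa using rowSpace_basis_comp LinearMap.id B

end LCDEmbedding

theorem stmt11_general {F : Type*} [Field F] {n k ℓ : ℕ}
    (C : Submodule F (Fin n → F))
    (hk : k = Module.finrank F C)
    (hl : ℓ = Module.finrank F ↥(sHull (id : F → F) C))
    (Ct : Submodule F (Fin n ⊕ Fin ℓ → F))
    (hLCD : sHull (id : F → F) Ct = ⊥)
    (hpunct : Submodule.map (LinearMap.funLeft F F (Sum.inl : Fin n → Fin n ⊕ Fin ℓ)) Ct = C) :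
    ∃ (H : Matrix (Fin ℓ) (Fin n) F) (A : Matrix (Fin (k - ℓ)) (Fin n) F)
      (C' : Matrix (Fin (k - ℓ)) (Fin ℓ) F),
      rowSpace H = sHull (id : F → F) C ∧
      rowSpace (fromRows H A) = C ∧
      LinearIndependent F (fromBlocks H (1 : Matrix (Fin ℓ) (Fin ℓ) F) A C') ∧
      rowSpace (fromBlocks H (1 : Matrix (Fin ℓ) (Fin ℓ) F) A C') = Ct := by
  subst hpunct hk
  have hℓk : ℓ ≤ finrank F (Ct.map (LinearMap.funLeft F F Sum.inl)) :=
    hl.le.trans (Submodule.finrank_mono (sHull_le id _))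
  exact exists_fromBlocks_one_generator hLCD (by simpa using hl.symm) (by simp; omega)

/-- every shortest LCD embedding has a generator matrix of the form
`[[H, I_ℓ], [A, C']]`. -/
theorem stmt11 {F : Type*} [Field F] [Fintype F] {n k ℓ : ℕ}
    (C : Submodule F (Fin n → F))
    (hk : k = Module.finrank F C)
    (hl : ℓ = Module.finrank F ↥(sHull (id : F → F) C))
    (Ct : Submodule F (Fin n ⊕ Fin ℓ → F))
    (hLCD : sHull (id : F → F) Ct = ⊥)
    (hpunct : Submodule.map (LinearMap.funLeft F F (Sum.inl : Fin n → Fin n ⊕ Fin ℓ)) Ct = C) :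
    ∃ (H : Matrix (Fin ℓ) (Fin n) F) (A : Matrix (Fin (k - ℓ)) (Fin n) F)
      (C' : Matrix (Fin (k - ℓ)) (Fin ℓ) F),
      rowSpace H = sHull (id : F → F) C ∧
      rowSpace (fromRows H A) = C ∧
      LinearIndependent F (fromBlocks H (1 : Matrix (Fin ℓ) (Fin ℓ) F) A C') ∧
      rowSpace (fromBlocks H (1 : Matrix (Fin ℓ) (Fin ℓ) F) A C') = Ct :=
  stmt11_general C hk hl Ct hLCD hpunct
end

section
/- The quaternary simplex code S_{4,r} of parameters [(4^r−1)/3, r, 4^{r−1}] is Hermitian self-orthogonal for all r ≥ 2. -/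
open Matrix

variable {F : Type*} [Field F]

/-!
Each nonzero vector of `𝔽₄ʳ` is `a • c i` for exactly one column `i` and one of the three units
`a`, and the Hermitian product `v x * v y ^ 2` of two coordinates is invariant under `v ↦ a • v`
because `a ^ 3 = 1`. Hence `3` times the Hermitian product of rows `x` and `y` of the generator
matrix is the sum of `v x * v y ^ 2` over all of `𝔽₄ʳ`, which vanishes by the Chevalley–Warning
sum lemma since the degree `3` is below `(4 - 1) * r` once `r ≥ 2`; and `3 = 1` in `𝔽₄`.
Sesquilinearity of the form extends orthogonality from the rows to the whole row space.
-/

open Finset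

theorem sum_units_smul_eq_sum_erase_zero {K V ι M : Type*} [DivisionRing K] [Fintype K]
    [DecidableEq K] [AddCommGroup V] [Module K V] [Fintype V] [DecidableEq V] [Fintype ι]
    [AddCommMonoid M]
    (c : ι → V) (hc0 : ∀ i, c i ≠ 0)
    (hproj : ∀ v : V, v ≠ 0 → ∃! i : ι, ∃ a : Kˣ, (a : K) • c i = v) (f : V → M) :
    ∑ i, ∑ a : Kˣ, f ((a : K) • c i) = ∑ v ∈ univ.erase 0, f v := by
  rw [← Fintype.sum_prod_type']
  refine sum_nbij (fun p => (p.2 : K) • c p.1) ?_ ?_ ?_ (fun _ _ => rfl)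
  · intro p _
    exact mem_erase.mpr ⟨smul_ne_zero p.2.ne_zero (hc0 p.1), mem_univ _⟩
  · rintro ⟨i, a⟩ - ⟨j, b⟩ - (h : (a : K) • c i = (b : K) • c j)
    obtain ⟨_, -, huniq⟩ := hproj _ (smul_ne_zero a.ne_zero (hc0 i))
    obtain rfl : i = j := (huniq i ⟨a, rfl⟩).trans (huniq j ⟨b, h.symm⟩).symm
    exact Prod.ext rfl (Units.ext (smul_left_injective K (hc0 i) h))
  · intro v hv
    obtain ⟨i, ⟨a, ha⟩, -⟩ := hproj v (mem_erase.mp hv).1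
    exact ⟨(i, a), mem_coe.mpr (mem_univ _), ha⟩

theorem sum_apply_mul_apply_pow_eq_zero {K σ : Type*} [Field K] [Fintype K] [Fintype σ]
    [DecidableEq σ] (x y : σ) {k : ℕ} (hk : k + 1 < (Fintype.card K - 1) * Fintype.card σ) :
    ∑ v : σ → K, v x * v y ^ k = 0 := by
  have hdeg : (MvPolynomial.X x * MvPolynomial.X y ^ k : MvPolynomial σ K).totalDegree ≤ k + 1 :=
    calc _ ≤ (MvPolynomial.X x : MvPolynomial σ K).totalDegree
          + (MvPolynomial.X y ^ k : MvPolynomial σ K).totalDegree :=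
          MvPolynomial.totalDegree_mul _ _
      _ ≤ 1 + k := by
          gcongr
          · exact (MvPolynomial.totalDegree_X _).le
          · exact (MvPolynomial.totalDegree_X_pow _ _).le
      _ = k + 1 := add_comm _ _
  simpa using MvPolynomial.sum_eval_eq_zero _ (hdeg.trans_lt hk)

theorem sum_mul_pow_eq_zero_of_projective {K σ ι : Type*} [Field K] [Fintype K]
    [DecidableEq K] [Fintype σ] [DecidableEq σ] [Fintype ι] (c : ι → σ → K) (hc0 : ∀ i, c i ≠ 0)
    (hproj : ∀ v : σ → K, v ≠ 0 → ∃! i : ι, ∃ a : Kˣ, (a : K) • c i = v)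
    {k : ℕ} (hunit : ∀ a : Kˣ, (a : K) ^ (k + 1) = 1)
    (hk : k + 1 < (Fintype.card K - 1) * Fintype.card σ) (x y : σ) :
    ∑ i, c i x * c i y ^ k = 0 := by
  set f : (σ → K) → K := fun v => v x * v y ^ k
  have hscale (a : Kˣ) (v : σ → K) : f ((a : K) • v) = f v := by
    calc (a : K) * v x * ((a : K) * v y) ^ k = (a : K) ^ (k + 1) * f v := by ring
      _ = f v := by rw [hunit, one_mul]
  have hcard : (Fintype.card Kˣ : K) = -1 := by
    rw [Fintype.card_units, Nat.cast_sub Fintype.card_pos, FiniteField.cast_card_eq_zero]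
    simp
  have key : (Fintype.card Kˣ : K) * ∑ i, f (c i) = 0 :=
    calc (Fintype.card Kˣ : K) * ∑ i, f (c i) = ∑ i, ∑ a : Kˣ, f ((a : K) • c i) := by
          simp [hscale, mul_sum]
      _ = ∑ v ∈ univ.erase 0, f v := sum_units_smul_eq_sum_erase_zero c hc0 hproj f
      _ = ∑ v, f v := sum_erase _ (by simp [f])
      _ = 0 := sum_apply_mul_apply_pow_eq_zero x y hk
  simpa [hcard] using key

theorem span_le_sDual_of_forall {F ι : Type*} [Field F] [Fintype ι] (σ : F →+* F)
    (S : Set (ι → F)) (h : ∀ u ∈ S, ∀ v ∈ S, ∑ i, u i * σ (v i) = 0) :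
    Submodule.span F S ≤ sDual σ (Submodule.span F S) := by
  refine Submodule.span_le.mpr fun u hu w hw => ?_
  induction hw using Submodule.span_induction with
  | mem v hv => exact h u hu v hv
  | zero => simp
  | add v w _ _ hv hw => simp [mul_add, sum_add_distrib, hv, hw]
  | smul t v _ hv => simp [mul_left_comm _ (σ t), ← mul_sum, hv]

theorem stmt13_general {r : ℕ} (hr : 2 ≤ r) {ι : Type*} [Fintype ι]
    (c : ι → (Fin r → GaloisField 2 2))
    (hc0 : ∀ i, c i ≠ 0)
    (hproj : ∀ v : Fin r → GaloisField 2 2, v ≠ 0 →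
      ∃! i : ι, ∃ a : (GaloisField 2 2)ˣ, (a : GaloisField 2 2) • c i = v) :
    rowSpace (Matrix.of fun x i => c i x) ≤
      sDual (fun x : GaloisField 2 2 => x ^ 2)
        (rowSpace (Matrix.of fun x i => c i x)) := by
  classical
  let _ : Fintype (GaloisField 2 2) := Fintype.ofFinite _
  have hcard : Fintype.card (GaloisField 2 2) = 4 := by
    rw [← Nat.card_eq_fintype_card, GaloisField.card 2 2 two_ne_zero]
    norm_num
  have hcube (a : (GaloisField 2 2)ˣ) : (a : GaloisField 2 2) ^ (2 + 1) = 1 := by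
    simpa [hcard] using FiniteField.pow_card_sub_one_eq_one (a : GaloisField 2 2) a.ne_zero
  refine span_le_sDual_of_forall (frobenius (GaloisField 2 2) 2) _ ?_
  rintro _ ⟨x, rfl⟩ _ ⟨y, rfl⟩
  exact sum_mul_pow_eq_zero_of_projective c hc0 hproj hcube (by simp [hcard]; omega) x y

/-- the quaternary simplex code `S_{4,r}` is Hermitian self-orthogonal for
`r ≥ 2`. -/
theorem stmt13 {r : ℕ} (hr : 2 ≤ r) {ι : Type*} [Fintype ι]
    (c : ι → (Fin r → GaloisField 2 2))
    (hcard : Fintype.card ι = (4 ^ r - 1) / 3)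
    (hc0 : ∀ i, c i ≠ 0)
    (hproj : ∀ v : Fin r → GaloisField 2 2, v ≠ 0 →
      ∃! i : ι, ∃ a : (GaloisField 2 2)ˣ, (a : GaloisField 2 2) • c i = v) :
    rowSpace (Matrix.of fun x i => c i x) ≤
      sDual (fun x : GaloisField 2 2 => x ^ 2)
        (rowSpace (Matrix.of fun x i => c i x)) :=
  stmt13_general hr c hc0 hproj
end

section
/- Let H_{q,r} be the q-ary Hamming code of parameters [(q^r−1)/(q−1), (q^r−1)/(q−1)−r, 3], for q ∈ {2,3,4} (with r ≥ 3 if q=2 and r ≥ 2 otherwise; Hermitian duality for q=4). Then dim Hull(H_{q,r}) = r, and hence the minimal length of an LCD embedding of H_{q,r} is (q^r−1)/(q−1) + r. -/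
open Matrix

variable {F : Type*} [Field F]

/-! The rows of the check matrix `(c i x)` span the simplex code `S`, and `S` is self-orthogonal:
since `a * σ a = 1` for every unit `a` and the `c i` represent each nonzero vector exactly once up
to a unit, `(q - 1) ⟨row x, row y⟩ = ∑_{u ∈ F^r} u x * σ (u y)`, a sum that factors over the
coordinates and has a vanishing factor. Hence the Hamming code `S^⊥` has hull `S^⊥ ∩ S = S`, of
dimension `r`.

For any LCD embedding `Ct` of a code `C` of length `n`, the codewords of `Ct` punctured into
`Hull C` inject into the coordinates outside the `n` kept ones (one supported on the kept
coordinates would lie in `Hull Ct = 0`), so the length is at least `n + dim Hull C`. Conversely,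
appending to each `x ∈ C` the coordinates of a projection of `x` onto `Hull C` gives an LCD
embedding of length exactly `n + dim Hull C`. -/

section Duality

variable {ι : Type*} [Fintype ι]

theorem sum_mul_map_comm {σ : F →+* F} (hσ : Function.Involutive σ) (x y : ι → F) :
    ∑ i, x i * σ (y i) = σ (∑ i, y i * σ (x i)) := by
  simp only [map_sum, map_mul, hσ _, mul_comm]

theorem mem_sDual_span_iff (σ : F →+* F) {S : Set (ι → F)} {x : ι → F} :
    x ∈ sDual σ (Submodule.span F S) ↔ ∀ c ∈ S, ∑ i, x i * σ (c i) = 0 := by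
  refine ⟨fun hx c hc => hx c (Submodule.subset_span hc), fun h c hc => ?_⟩
  induction hc using Submodule.span_induction with
  | mem c hc => exact h c hc
  | zero => simp
  | add c d _ _ hc hd => simp [mul_add, Finset.sum_add_distrib, hc, hd]
  | smul a c _ hc =>
    simp only [Pi.smul_apply, smul_eq_mul, map_mul, mul_left_comm _ (σ a), ← Finset.mul_sum, hc,
      mul_zero]

theorem span_le_sDual_span (σ : F →+* F) {S : Set (ι → F)}
    (h : ∀ x ∈ S, ∀ y ∈ S, ∑ i, x i * σ (y i) = 0) :
    Submodule.span F S ≤ sDual σ (Submodule.span F S) :=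
  Submodule.span_le.mpr fun x hx => (mem_sDual_span_iff σ).mpr (h x hx)

theorem le_sDual_sDual {σ : F →+* F} (hσ : Function.Involutive σ) (C : Submodule F (ι → F)) :
    C ≤ sDual σ (sDual σ C) := fun c hc x hx => by
  rw [sum_mul_map_comm hσ, hx c hc, map_zero]

theorem finrank_sDual_id_add_finrank (C : Submodule F (ι → F)) :
    Module.finrank F (sDual id C) + Module.finrank F C = Fintype.card ι := by
  classical
  have h : sDual id C = C.dualAnnihilator.comap (dotProductEquiv F ι).toLinearMap := by
    ext x
    simp [sDual, Submodule.mem_dualAnnihilator, dotProduct]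
  rw [h, Submodule.comap_equiv_eq_map_symm, LinearEquiv.finrank_map_eq, add_comm,
    Subspace.finrank_add_finrank_dualAnnihilator_eq, Module.finrank_fintype_fun_eq_card]

/-- Conjugating coordinates by `σ` is a `σ`-semilinear bijection from `sDual σ C` onto
`sDual id C`. -/
theorem finrank_sDual_eq_finrank_sDual_id {σ : F →+* F} (hσ : Function.Involutive σ)
    (C : Submodule F (ι → F)) :
    Module.finrank F (sDual σ C) = Module.finrank F (sDual id C) := by
  have conj_mem : ∀ x ∈ sDual σ C, (fun i => σ (x i)) ∈ sDual id C := fun x hx c hc => by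
    simp only [id, mul_comm (σ _)]
    rw [sum_mul_map_comm hσ c x, hx c hc, map_zero]
  have conj_mem' : ∀ x ∈ sDual id C, (fun i => σ (x i)) ∈ sDual σ C := fun x hx c hc => by
    simp [← map_mul, ← map_sum, show ∑ i, x i * c i = 0 from hx c hc]
  let conj : sDual σ C ≃+ sDual id C :=
    { toFun x := ⟨_, conj_mem x x.2⟩
      invFun x := ⟨_, conj_mem' x x.2⟩
      left_inv x := by ext; simp [hσ _]
      right_inv x := by ext; simp [hσ _]
      map_add' x y := by ext; simp }
  have := rank_eq_of_equiv_equiv σ conj hσ.bijective fun a x => by ext; simp [conj]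
  simp [Module.finrank, this]

theorem finrank_sDual_add_finrank {σ : F →+* F} (hσ : Function.Involutive σ)
    (C : Submodule F (ι → F)) :
    Module.finrank F (sDual σ C) + Module.finrank F C = Fintype.card ι := by
  rw [finrank_sDual_eq_finrank_sDual_id hσ, finrank_sDual_id_add_finrank]

theorem sDual_sDual {σ : F →+* F} (hσ : Function.Involutive σ) (C : Submodule F (ι → F)) :
    sDual σ (sDual σ C) = C := by
  have h₁ := finrank_sDual_add_finrank hσ C
  have h₂ := finrank_sDual_add_finrank hσ (sDual σ C)
  exact (Submodule.eq_of_le_of_finrank_le (le_sDual_sDual hσ C) (by omega)).symm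

theorem sHull_sDual_of_le {σ : F →+* F} (hσ : Function.Involutive σ) {C : Submodule F (ι → F)}
    (h : C ≤ sDual σ C) : sHull σ (sDual σ C) = C := by
  rw [sHull, sDual_sDual hσ, inf_eq_right.mpr h]

end Duality

section Embedding

variable {ι κ : Type*} {N : ℕ}

def extendCoords (P : (ι → F) →ₗ[F] (κ → F)) (e : ι ⊕ κ ≃ Fin N) :
    (ι → F) →ₗ[F] (Fin N → F) where
  toFun x j := Sum.elim x (P x) (e.symm j)
  map_add' x y := by ext j; rcases h : e.symm j with i | k <;> simp [h]
  map_smul' a x := by ext j; rcases h : e.symm j with i | k <;> simp [h]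

theorem extendCoords_apply_inl (P : (ι → F) →ₗ[F] (κ → F)) (e : ι ⊕ κ ≃ Fin N) (x : ι → F)
    (i : ι) : extendCoords P e x (e (.inl i)) = x i := by
  simp [extendCoords]

theorem map_funLeft_map_extendCoords (P : (ι → F) →ₗ[F] (κ → F)) (e : ι ⊕ κ ≃ Fin N)
    (H : Submodule F (ι → F)) :
    (H.map (extendCoords P e)).map (LinearMap.funLeft F F (e ∘ .inl)) = H := by
  have : LinearMap.funLeft F F (e ∘ .inl) ∘ₗ extendCoords P e = LinearMap.id := by
    ext x i; simp [extendCoords_apply_inl]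
  rw [← Submodule.map_comp, this, Submodule.map_id]

variable [Fintype ι] [Fintype κ]

theorem mem_sDual_of_puncture_mem_sDual {s : F → F} {C : Submodule F (ι → F)}
    {Ct : Submodule F (Fin N → F)} {f : ι → Fin N} (hf : Function.Injective f)
    (hmap : Ct.map (LinearMap.funLeft F F f) = C) {w : Fin N → F}
    (hw : ∀ j ∉ Set.range f, w j = 0) (hwC : w ∘ f ∈ sDual s C) : w ∈ sDual s Ct := by
  intro d hd
  rw [← Fintype.sum_of_injective f hf (fun i => w (f i) * s (d (f i))) _
    (fun j hj => by rw [hw j hj, zero_mul]) fun _ => rfl]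
  exact hwC _ (hmap ▸ Submodule.mem_map_of_mem hd)

theorem card_add_finrank_sHull_le {s : F → F} {C : Submodule F (ι → F)}
    {Ct : Submodule F (Fin N → F)} (h : IsLCDEmbedding s C Ct) :
    Fintype.card ι + Module.finrank F (sHull s C) ≤ N := by
  obtain ⟨hhull, f, hf, hmap⟩ := h
  let π := LinearMap.funLeft F F f
  let W := Ct ⊓ (sHull s C).comap π
  let ρ : (Fin N → F) →ₗ[F] ({j // j ∉ Set.range f} → F) := LinearMap.funLeft F F Subtype.val
  have hW : sHull s C ≤ W.map π := by
    intro z hz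
    obtain ⟨w, hw, rfl⟩ := (hmap ▸ hz.1 : z ∈ Ct.map π)
    exact ⟨w, ⟨hw, hz⟩, rfl⟩
  -- A codeword of `W` supported on `range f` is orthogonal to all of `Ct`, hence zero.
  have hρ : Function.Injective (ρ.domRestrict W) := by
    rw [← LinearMap.ker_eq_bot, LinearMap.ker_eq_bot']
    rintro ⟨w, hwCt, hwC⟩ hw
    have hw' : ∀ j ∉ Set.range f, w j = 0 := fun j hj => congrFun hw ⟨j, hj⟩
    have : w ∈ sHull s Ct := ⟨hwCt, mem_sDual_of_puncture_mem_sDual hf hmap hw' hwC.2⟩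
    simpa [hhull, Subtype.ext_iff] using this
  have hcard : Fintype.card {j // j ∉ Set.range f} = N - Fintype.card ι := by
    rw [Fintype.card_subtype_compl, Fintype.card_fin, Set.card_range_of_injective hf]
  have hι : Fintype.card ι ≤ N := by simpa using Fintype.card_le_of_injective f hf
  have := calc Module.finrank F (sHull s C)
      _ ≤ Module.finrank F (W.map π) := Submodule.finrank_mono hW
      _ ≤ Module.finrank F W := Submodule.finrank_map_le π W
      _ ≤ Module.finrank F ({j // j ∉ Set.range f} → F) :=
        LinearMap.finrank_le_finrank_of_injective hρ
      _ = N - Fintype.card ι := by rw [Module.finrank_fintype_fun_eq_card, hcard]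
  omega

theorem sum_extendCoords_mul (s : F → F) (P : (ι → F) →ₗ[F] (κ → F)) (e : ι ⊕ κ ≃ Fin N)
    (x y : ι → F) :
    ∑ j, extendCoords P e x j * s (extendCoords P e y j) =
      ∑ i, x i * s (y i) + ∑ k, P x k * s (P y k) := by
  rw [← e.sum_comp, Fintype.sum_sum_type]
  simp [extendCoords]

/-- A codeword `(x, P x)` orthogonal to the extended code has `P x ⊥ P (hull H) = F^κ`, so
`P x = 0`; then `x` lies in the hull of `H`, on which `P` is injective. -/
theorem sHull_map_extendCoords_eq_bot {σ : F →+* F} (hσ : Function.Involutive σ)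
    {H : Submodule F (ι → F)} (P : (ι → F) →ₗ[F] (κ → F)) (e : ι ⊕ κ ≃ Fin N)
    (eH : sHull σ H ≃ₗ[F] (κ → F)) (hP : P ∘ₗ (sHull σ H).subtype = eH.toLinearMap) :
    sHull σ (H.map (extendCoords P e)) = ⊥ := by
  classical
  have hPe : ∀ y : sHull σ H, P y = eH y := fun y => LinearMap.congr_fun hP y
  rw [Submodule.eq_bot_iff]
  rintro _ ⟨⟨x, hx, rfl⟩, hxD⟩
  have orth : ∀ y ∈ H, ∑ i, x i * σ (y i) + ∑ k, P x k * σ (P y k) = 0 := fun y hy => by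
    rw [← sum_extendCoords_mul]
    exact hxD _ (Submodule.mem_map_of_mem hy)
  have hPx : P x = 0 := by
    ext k
    let y := eH.symm (Pi.single k 1)
    have hxy : ∑ i, x i * σ ((y : ι → F) i) = 0 := by
      rw [sum_mul_map_comm hσ, y.2.2 x hx, map_zero]
    have := orth y y.2.1
    rw [hxy, zero_add, hPe, LinearEquiv.apply_symm_apply] at this
    simpa [Pi.single_apply] using this
  have hxHull : x ∈ sHull σ H := ⟨hx, fun y hy => by simpa [hPx] using orth y hy⟩
  have : eH ⟨x, hxHull⟩ = 0 := by rw [← hPe]; exact hPx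
  have hx0 : x = 0 := by simpa [Subtype.ext_iff] using this
  rw [hx0, map_zero]

theorem exists_isLCDEmbedding {σ : F →+* F} (hσ : Function.Involutive σ)
    (H : Submodule F (ι → F)) (hN : Fintype.card ι + Module.finrank F (sHull σ H) = N) :
    ∃ Ct : Submodule F (Fin N → F), IsLCDEmbedding σ H Ct := by
  let K := sHull σ H
  obtain ⟨g, hg⟩ := K.subtype.exists_leftInverse_of_injective K.ker_subtype
  let eK := (Module.finBasis F K).equivFun
  let e : ι ⊕ Fin (Module.finrank F K) ≃ Fin N :=
    (((Fintype.equivFin ι).sumCongr (Equiv.refl _)).trans finSumFinEquiv).trans (finCongr hN)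
  refine ⟨H.map (extendCoords (eK.toLinearMap ∘ₗ g) e), ?_, e ∘ .inl,
    e.injective.comp Sum.inl_injective, map_funLeft_map_extendCoords _ _ H⟩
  exact sHull_map_extendCoords_eq_bot hσ _ e eK (by rw [LinearMap.comp_assoc, hg]; rfl)

end Embedding

section Simplex

variable {ι κ : Type*}

theorem span_range_eq_top {c : ι → κ → F}
    (hproj : ∀ v : κ → F, v ≠ 0 → ∃! i, ∃ a : Fˣ, (a : F) • c i = v) :
    Submodule.span F (Set.range c) = ⊤ := by
  refine Submodule.eq_top_iff'.mpr fun v => ?_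
  rcases eq_or_ne v 0 with rfl | hv
  · exact Submodule.zero_mem _
  · obtain ⟨i, ⟨a, rfl⟩, -⟩ := hproj v hv
    exact Submodule.smul_mem _ _ (Submodule.subset_span ⟨i, rfl⟩)

variable [Fintype ι] [Fintype κ]

theorem finrank_rowSpace_of_span_eq_top {c : ι → κ → F}
    (h : Submodule.span F (Set.range c) = ⊤) :
    Module.finrank F (rowSpace (Matrix.of fun x i => c i x)) = Fintype.card κ := by
  have := (Matrix.of fun x i => c i x).rank_eq_finrank_span_row
  rw [Matrix.rank_eq_finrank_span_cols] at this
  have hcol : (Matrix.of fun x i => c i x).col = c := rfl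
  rw [hcol, h, finrank_top, Module.finrank_fintype_fun_eq_card] at this
  exact this.symm

variable [Fintype F] [DecidableEq κ]

theorem sum_apply_mul_map_apply_eq_zero (σ : F →+* F) {x y : κ}
    (h : (∃ j, j ≠ x ∧ j ≠ y) ∨ (x ≠ y ∧ ∑ a : F, a = 0)) :
    ∑ u : κ → F, u x * σ (u y) = 0 := by
  -- Write the summand as a product over coordinates, so that the sum factors.
  let g : κ → F → F := fun j a => (if j = x then a else 1) * (if j = y then σ a else 1)
  have hprod : ∀ u : κ → F, ∏ j, g j (u j) = u x * σ (u y) := fun u => by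
    simp only [g, Finset.prod_mul_distrib, Finset.prod_ite_eq', Finset.mem_univ, if_true]
  simp_rw [← hprod, ← Fintype.prod_sum]
  rcases h with ⟨j, hjx, hjy⟩ | ⟨hxy, hsum⟩
  · exact Finset.prod_eq_zero (Finset.mem_univ j) (by simp [g, hjx, hjy])
  · exact Finset.prod_eq_zero (Finset.mem_univ x) (by simp [g, hxy, hsum])

theorem sum_eq_card_units_smul_sum [DecidableEq F] {M : Type*} [AddCommMonoid M]
    {c : ι → κ → F}
    (hc0 : ∀ i, c i ≠ 0) (hproj : ∀ v : κ → F, v ≠ 0 → ∃! i, ∃ a : Fˣ, (a : F) • c i = v)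
    {g : (κ → F) → M} (hg0 : g 0 = 0) (hg : ∀ (a : Fˣ) v, g ((a : F) • v) = g v) :
    ∑ u, g u = Fintype.card Fˣ • ∑ i, g (c i) := by
  have hinj : Function.Injective fun p : ι × Fˣ => (p.2 : F) • c p.1 := by
    rintro ⟨i, a⟩ ⟨i', a'⟩ h
    obtain ⟨_, -, huniq⟩ := hproj _ (smul_ne_zero a.ne_zero (hc0 i))
    obtain rfl : i = i' := (huniq i ⟨a, rfl⟩).trans (huniq i' ⟨a', h.symm⟩).symm
    simpa [Units.ext_iff] using smul_left_injective F (hc0 i) h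
  have hrange : ∀ u ∉ Set.range fun p : ι × Fˣ => (p.2 : F) • c p.1, g u = 0 := by
    intro u hu
    obtain rfl : u = 0 := by
      by_contra hu0
      obtain ⟨i, ⟨a, rfl⟩, -⟩ := hproj u hu0
      exact hu ⟨(i, a), rfl⟩
    exact hg0
  rw [← Fintype.sum_of_injective _ hinj _ g hrange fun _ => rfl, Fintype.sum_prod_type]
  simp [hg, Finset.smul_sum]

theorem rowSpace_le_sDual_rowSpace {σ : F →+* F} (hσ : ∀ a : F, a ≠ 0 → a * σ a = 1)
    {c : ι → κ → F} (hc0 : ∀ i, c i ≠ 0)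
    (hproj : ∀ v : κ → F, v ≠ 0 → ∃! i, ∃ a : Fˣ, (a : F) • c i = v)
    (horth : ∀ x y : κ, ∑ u : κ → F, u x * σ (u y) = 0) :
    rowSpace (Matrix.of fun x i => c i x) ≤ sDual σ (rowSpace (Matrix.of fun x i => c i x)) := by
  classical
  refine span_le_sDual_span σ ?_
  rintro _ ⟨x, rfl⟩ _ ⟨y, rfl⟩
  have hsum := sum_eq_card_units_smul_sum hc0 hproj (g := fun u => u x * σ (u y)) (by simp)
    fun a v => by
      simp only [Pi.smul_apply, smul_eq_mul, map_mul]
      rw [mul_mul_mul_comm, hσ a a.ne_zero, one_mul]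
  have hunits : ((Fintype.card Fˣ : ℕ) : F) = -1 := by
    rw [Fintype.card_units, Nat.cast_sub Fintype.card_pos, FiniteField.cast_card_eq_zero]
    simp
  rw [horth, nsmul_eq_mul, hunits, zero_eq_mul] at hsum
  simpa using hsum

end Simplex

section SmallFields

variable [Fintype F]

/-- For `|F| = 4` this is the Frobenius `x ↦ x ^ 2`, the conjugation of Hermitian duality. -/
theorem exists_ringHom_eq_pow_card_div_two
    (h : Fintype.card F = 2 ∨ Fintype.card F = 3 ∨ Fintype.card F = 4) :
    ∃ σ : F →+* F, ∀ x, σ x = x ^ (Fintype.card F / 2) := by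
  rcases h with h | h | h
  · exact ⟨RingHom.id F, fun x => by simp [h]⟩
  · exact ⟨RingHom.id F, fun x => by simp [h]⟩
  · have h2 : (2 : F) = 0 := by
      have h4 : (2 : F) * 2 = 0 := by
        have := FiniteField.cast_card_eq_zero F
        rw [h] at this
        norm_num at this ⊢
        exact this
      exact mul_self_eq_zero.mp h4
    have : CharP F 2 := (CharP.charP_iff_prime_eq_zero Nat.prime_two).mpr (by exact_mod_cast h2)
    exact ⟨frobenius F 2, fun x => by simp [h, frobenius_def]⟩

theorem pow_card_div_two_pow_card_div_two
    (h : Fintype.card F = 2 ∨ Fintype.card F = 3 ∨ Fintype.card F = 4) (x : F) :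
    (x ^ (Fintype.card F / 2)) ^ (Fintype.card F / 2) = x := by
  rcases h with h | h | h
  · simp [h]
  · simp [h]
  · rw [← pow_mul, h, show 4 / 2 * (4 / 2) = 4 by rfl, ← h, FiniteField.pow_card]

theorem mul_pow_card_div_two_of_ne_zero
    (h : Fintype.card F = 2 ∨ Fintype.card F = 3 ∨ Fintype.card F = 4) {a : F} (ha : a ≠ 0) :
    a * a ^ (Fintype.card F / 2) = 1 := by
  obtain ⟨k, hk⟩ : Fintype.card F - 1 ∣ Fintype.card F / 2 + 1 := by
    rcases h with h | h | h <;> simp [h]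
  rw [← pow_succ', hk, pow_mul, FiniteField.pow_card_sub_one_eq_one a ha, one_pow]

end SmallFields

/-- the `q`-ary Hamming code (the dual of the simplex code, with Hermitian duality
when `q = 4`, encoded by the conjugation `x ↦ x ^ (q / 2)`) has hull of dimension `r`, and its
minimal LCD embedding length is `(q^r - 1)/(q - 1) + r`. -/
theorem stmt14 {F : Type*} [Field F] [Fintype F] {q r : ℕ}
    (hq : q = Fintype.card F) (hq234 : q = 2 ∨ q = 3 ∨ q = 4)
    (hr2 : q = 2 → 3 ≤ r) (hr34 : q ≠ 2 → 2 ≤ r)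
    {ι : Type*} [Fintype ι] (c : ι → (Fin r → F))
    (hcard : Fintype.card ι = (q ^ r - 1) / (q - 1))
    (hc0 : ∀ i, c i ≠ 0)
    (hproj : ∀ v : Fin r → F, v ≠ 0 → ∃! i : ι, ∃ a : Fˣ, (a : F) • c i = v) :
    Module.finrank F ↥(sHull (fun x : F => x ^ (q / 2))
        (sDual (fun x : F => x ^ (q / 2)) (rowSpace (Matrix.of fun x i => c i x)))) = r ∧
      IsLeast {N : ℕ | ∃ Ct : Submodule F (Fin N → F),
          IsLCDEmbedding (fun x : F => x ^ (q / 2))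
            (sDual (fun x : F => x ^ (q / 2)) (rowSpace (Matrix.of fun x i => c i x))) Ct}
        ((q ^ r - 1) / (q - 1) + r) := by
  classical
  subst hq
  obtain ⟨σ, hσ⟩ := exists_ringHom_eq_pow_card_div_two hq234
  have hσinv : Function.Involutive σ := fun x => by
    simp only [hσ, pow_card_div_two_pow_card_div_two hq234]
  rw [show (fun x : F => x ^ (Fintype.card F / 2)) = σ from funext fun x => (hσ x).symm]
  have horth (x y : Fin r) : ∑ u : Fin r → F, u x * σ (u y) = 0 := by
    refine sum_apply_mul_map_apply_eq_zero σ ?_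
    by_cases h2 : Fintype.card F = 2
    · exact .inl (Fin.exists_ne_and_ne_of_two_lt x y (hr2 h2))
    rcases eq_or_ne x y with rfl | hxy
    · have := Fin.nontrivial_iff_two_le.mpr (hr34 h2)
      obtain ⟨j, hj⟩ := exists_ne x
      exact .inl ⟨j, hj, hj⟩
    · refine .inr ⟨hxy, by simpa using FiniteField.sum_pow_lt_card_sub_one (K := F) 1 (by omega)⟩
  have hself := rowSpace_le_sDual_rowSpace
    (fun a ha => by rw [hσ]; exact mul_pow_card_div_two_of_ne_zero hq234 ha) hc0 hproj horth
  have hhull :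
      Module.finrank F (sHull σ (sDual σ (rowSpace (Matrix.of fun x i => c i x)))) = r := by
    rw [sHull_sDual_of_le hσinv hself, finrank_rowSpace_of_span_eq_top (span_range_eq_top hproj),
      Fintype.card_fin]
  refine ⟨hhull, ?_, fun N ⟨Ct, hCt⟩ => ?_⟩
  · exact exists_isLCDEmbedding hσinv _ (by rw [hcard, hhull])
  · simpa [hcard, hhull] using card_add_finrank_sHull_le hCt
end
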